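/- Let G be a group and α an automorphism of G. Since the center Z(G) is a characteristic subgroup, α induces an automorphism ᾱ of G/Z(G). Then the map sending the automorphism i_n ∘ α (for n ∈ G) to the ᾱ-conjugacy class of the coset n·Z(G) induces a well-defined bijection between the set of isogredience classes of automorphisms of the form i_n ∘ α, n ∈ G, and the set of ᾱ-twisted conjugacy classes of the group G/Z(G). -/

import Mathlib

/-!
Since `i_k = i_{k'}` exactly when `k Z(G) = k' Z(G)`, the map `k Z(G) ↦ i_k ∘ α` identifies
`G/Z(G)` with the set of automorphisms `i_k ∘ α`. Under this identification isogredience becomes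
`ᾱ`-twisted conjugacy, because `i_h ∘ (i_k ∘ α) ∘ i_h⁻¹ = i_{h k α(h)⁻¹} ∘ α`.
-/

namespace MulAut

variable {G : Type*} [Group G]

theorem ker_conj : (conj : G →* MulAut G).ker = Subgroup.center G := by
  ext g
  simp only [MonoidHom.mem_ker, MulEquiv.ext_iff, conj_apply, one_apply, Subgroup.mem_center_iff]
  exact forall_congr' fun _ => mul_inv_eq_iff_eq_mul.trans eq_comm

theorem conj_eq_conj_iff {k k' : G} :
    conj k = conj k' ↔ (k : G ⧸ Subgroup.center G) = k' := by
  rw [MonoidHom.eq_iff, ker_conj, QuotientGroup.eq, ← Subgroup.inv_mem_iff, mul_inv_rev, inv_inv]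

theorem mul_conj (α : MulAut G) (h : G) : α * conj h = conj (α h) * α := by
  ext g
  simp [conj_apply]

theorem conj_mul_conj_mul_mul_conj_inv (α : MulAut G) (h k : G) :
    conj h * (conj k * α) * (conj h)⁻¹ = conj (h * k * (α h)⁻¹) * α := by
  rw [← map_inv, mul_assoc, mul_assoc, mul_conj, map_mul, map_mul, map_inv]
  simp only [mul_assoc]

end MulAut

open MulAut

section InnerCoset

variable {G : Type*} [Group G] (α : MulAut G)

noncomputable def centerQuotientEquivInnerCoset :
    G ⧸ Subgroup.center G ≃ {β : MulAut G // ∃ k : G, β = conj k * α} :=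
  Equiv.ofBijective
    (fun x => ⟨QuotientGroup.lift _ conj ker_conj.ge x * α,
      QuotientGroup.mk_surjective x |>.imp fun k hk => by rw [← hk, QuotientGroup.lift_mk]⟩)
    ⟨by
      rintro ⟨k⟩ ⟨k'⟩ h
      exact conj_eq_conj_iff.mp (mul_right_cancel (congrArg Subtype.val h)),
    by
      rintro ⟨_, k, rfl⟩
      exact ⟨k, rfl⟩⟩

theorem centerQuotientEquivInnerCoset_mk (k : G) :
    centerQuotientEquivInnerCoset α k = ⟨conj k * α, k, rfl⟩ :=
  rfl

theorem twistedConj_iff_isogredient_centerQuotientEquivInnerCoset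
    {αbar : (G ⧸ Subgroup.center G) ≃* (G ⧸ Subgroup.center G)}
    (hαbar : ∀ x : G, αbar (x : G ⧸ Subgroup.center G) = ((α x : G) : G ⧸ Subgroup.center G))
    (x y : G ⧸ Subgroup.center G) :
    (∃ γ, y = γ * x * (αbar γ)⁻¹) ↔
      ∃ h : G, (centerQuotientEquivInnerCoset α y : MulAut G) =
        conj h * centerQuotientEquivInnerCoset α x * (conj h)⁻¹ := by
  obtain ⟨k, rfl⟩ := QuotientGroup.mk_surjective x
  obtain ⟨k', rfl⟩ := QuotientGroup.mk_surjective y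
  simp only [centerQuotientEquivInnerCoset_mk, conj_mul_conj_mul_mul_conj_inv, mul_left_inj,
    conj_eq_conj_iff, QuotientGroup.mk_surjective.exists, hαbar, QuotientGroup.mk_mul,
    QuotientGroup.mk_inv]

end InnerCoset

/-- Let `α` be an automorphism of `G` and `ᾱ` the automorphism it induces on
`G/Z(G)` (so `ᾱ(x Z(G)) = α(x) Z(G)`).  Sending `i_n ∘ α` to the `ᾱ`-twisted
conjugacy class of `n Z(G)` induces a well-defined bijection from the set of
isogredience classes of automorphisms of the form `i_n ∘ α`, `n ∈ G`, onto the
set of `ᾱ`-twisted conjugacy classes of `G/Z(G)`. -/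
theorem isogredience_classes_equiv_twisted_classes_mod_center {G : Type*} [Group G]
    (α : MulAut G)
    (αbar : (G ⧸ Subgroup.center G) ≃* (G ⧸ Subgroup.center G))
    (hαbar : ∀ x : G, αbar (x : G ⧸ Subgroup.center G) = ((α x : G) : G ⧸ Subgroup.center G)) :
    ∃ B : Quot (fun β γ : {β : MulAut G // ∃ k : G, β = MulAut.conj k * α} =>
            ∃ h : G, (γ : MulAut G) = MulAut.conj h * (β : MulAut G) * (MulAut.conj h)⁻¹) ≃
          Quot (fun x y : G ⧸ Subgroup.center G => ∃ γ, y = γ * x * (αbar γ)⁻¹),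
      ∀ k : G,
        B (Quot.mk _ ⟨MulAut.conj k * α, k, rfl⟩) =
          Quot.mk _ ((k : G ⧸ Subgroup.center G)) := by
  let e := centerQuotientEquivInnerCoset α
  refine ⟨(Quot.congr e (twistedConj_iff_isogredient_centerQuotientEquivInnerCoset α hαbar)).symm,
    fun k => ?_⟩
  exact congrArg (Quot.mk _) (e.symm_apply_eq.mpr (centerQuotientEquivInnerCoset_mk α k).symm)
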